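/- arXiv:1903.05886 — 2 statements merged into one kernel-verified Lean document; each statement's English description precedes it below -/
import Mathlib

section
/- Let A>0, γ>1, ϱ̄ ≥ 0, p(ϱ) = Aϱ^γ and P(ϱ) = A(ϱ^γ − ϱ·ϱ̄^{γ−1})/(γ−1). For all 0 < r_min ≤ r_max < ∞ there exists a constant c₂ = c₂(A,γ,r_min,r_max) > 0 such that for every r ∈ [r_min, r_max] and every ϱ ≥ 0: |p(ϱ) − p′(r)(ϱ − r) − p(r)| ≤ c₂ (P(ϱ) − P′(r)(ϱ − r) − P(r)). -/
open Real

/-!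
The potential `P` is `p / (γ - 1)` plus an affine function of `ϱ`, and affine terms do not
contribute to a first-order Taylor remainder. Hence the remainder of `P` at `r` is exactly the
remainder of `p` divided by `γ - 1`, and the remainder of `p` is nonnegative because `ϱ ↦ ϱ ^ γ`
is convex on `[0, ∞)`. So `c₂ = γ - 1` works, with equality, at every `r ≥ 0`.
-/

noncomputable def taylorRemainder (f : ℝ → ℝ) (r x : ℝ) : ℝ :=
  f x - deriv f r * (x - r) - f r

lemma taylorRemainder_mul_add_mul {g : ℝ → ℝ} {r : ℝ} (hg : DifferentiableAt ℝ g r)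
    (a b x : ℝ) :
    taylorRemainder (fun y => a * g y + b * y) r x = a * taylorRemainder g r x := by
  have hderiv : HasDerivAt (fun y => a * g y + b * y) (a * deriv g r + b) r :=
    ((hg.hasDerivAt.const_mul a).add ((hasDerivAt_id' r).const_mul b)).congr_deriv (by ring)
  simp only [taylorRemainder, hderiv.deriv]
  ring

lemma ConvexOn.taylorRemainder_nonneg {S : Set ℝ} {f : ℝ → ℝ} {r x : ℝ}
    (hf : ConvexOn ℝ S f) (hr : r ∈ S) (hx : x ∈ S) (hfr : DifferentiableAt ℝ f r) :
    0 ≤ taylorRemainder f r x := by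
  unfold taylorRemainder
  rcases lt_trichotomy x r with hxr | rfl | hrx
  · have hslope := hf.slope_le_deriv hx hr hxr hfr
    rw [slope_def_field, div_le_iff₀ (sub_pos.2 hxr)] at hslope
    linarith
  · simp
  · have hslope := hf.deriv_le_slope hr hx hrx hfr
    rw [slope_def_field, le_div_iff₀ (sub_pos.2 hrx)] at hslope
    linarith

theorem stmt4_general (A γ ϱbar : ℝ) (hA : 0 < A) (hγ : 1 < γ)
    (p P : ℝ → ℝ)
    (hp : ∀ ϱ : ℝ, p ϱ = A * ϱ ^ γ)
    (hP : ∀ ϱ : ℝ, P ϱ = A * (ϱ ^ γ - ϱ * ϱbar ^ (γ - 1)) / (γ - 1)) :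
    ∀ rmin rmax : ℝ, 0 < rmin → rmin ≤ rmax →
      ∃ c₂ > (0:ℝ), ∀ r ∈ Set.Icc rmin rmax, ∀ ϱ ≥ (0:ℝ),
        |p ϱ - deriv p r * (ϱ - r) - p r| ≤
          c₂ * (P ϱ - deriv P r * (ϱ - r) - P r) := by
  intro rmin rmax hrmin _
  have hγ1 : 0 < γ - 1 := sub_pos.2 hγ
  refine ⟨γ - 1, hγ1, fun r hr ϱ hϱ => ?_⟩
  change |taylorRemainder p r ϱ| ≤ (γ - 1) * taylorRemainder P r ϱ
  obtain rfl : p = fun y => A * y ^ γ + 0 * y := funext fun y => by rw [hp]; ring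
  obtain rfl : P = fun y => A / (γ - 1) * y ^ γ + -(A * ϱbar ^ (γ - 1) / (γ - 1)) * y :=
    funext fun y => by rw [hP]; ring
  have hdiff : DifferentiableAt ℝ (fun y : ℝ => y ^ γ) r :=
    (hasDerivAt_rpow_const (Or.inr hγ.le)).differentiableAt
  have hconvex : 0 ≤ taylorRemainder (fun y : ℝ => y ^ γ) r ϱ :=
    (convexOn_rpow hγ.le).taylorRemainder_nonneg (hrmin.le.trans hr.1) hϱ hdiff
  rw [taylorRemainder_mul_add_mul hdiff, taylorRemainder_mul_add_mul hdiff,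
    abs_of_nonneg (mul_nonneg hA.le hconvex)]
  exact le_of_eq (by field_simp)

/-- For `A > 0`, `γ > 1`, `ϱ̄ ≥ 0`, `p(ϱ) = A ϱ^γ` and
`P(ϱ) = A (ϱ^γ - ϱ ϱ̄^(γ-1)) / (γ-1)`: for all `0 < r_min ≤ r_max < ∞` there is a
constant `c₂ > 0` such that for every `r ∈ [r_min, r_max]` and every `ϱ ≥ 0`, the
first-order Taylor remainder of `p` at `r` is dominated by `c₂` times the (nonnegative)
first-order Taylor remainder of `P` at `r`:
`|p(ϱ) - p'(r)(ϱ - r) - p(r)| ≤ c₂ (P(ϱ) - P'(r)(ϱ - r) - P(r))`. -/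
theorem stmt4 (A γ ϱbar : ℝ) (hA : 0 < A) (hγ : 1 < γ) (hϱbar : 0 ≤ ϱbar)
    (p P : ℝ → ℝ)
    (hp : ∀ ϱ : ℝ, p ϱ = A * ϱ ^ γ)
    (hP : ∀ ϱ : ℝ, P ϱ = A * (ϱ ^ γ - ϱ * ϱbar ^ (γ - 1)) / (γ - 1)) :
    ∀ rmin rmax : ℝ, 0 < rmin → rmin ≤ rmax →
      ∃ c₂ > (0:ℝ), ∀ r ∈ Set.Icc rmin rmax, ∀ ϱ ≥ (0:ℝ),
        |p ϱ - deriv p r * (ϱ - r) - p r| ≤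
          c₂ * (P ϱ - deriv P r * (ϱ - r) - P r) :=
  stmt4_general A γ ϱbar hA hγ p P hp hP
end

section
/- Let Q ⊆ ℝ^d be measurable and let (z^R)_{R>0}, z^R : Q → ℝ^m measurable, generate a Young measure ν = (ν_y)_{y∈Q}, i.e. each ν_y is a probability measure on ℝ^m, y ↦ ν_y is weak-* measurable, and for every ψ ∈ L¹(Q; C₀(ℝ^m)) one has ∫_Q ψ(y, z^R(y)) dy → ∫_Q (∫_{ℝ^m} ψ(y,λ) dν_y(λ)) dy as R → ∞. Let G : ℝ^m → [0,∞) be continuous with sup_{R>0} ∫_Q G(z^R(y)) dy < ∞, and let F : ℝ^m → ℝ be continuous with |F(z)| ≤ G(z) for all z ∈ ℝ^m. Let φ ∈ C_c(Q) with φ ≥ 0, and assume the limits L_F = lim_{R→∞} ∫_Q F(z^R(y)) φ(y) dy and L_G = lim_{R→∞} ∫_Q G(z^R(y)) φ(y) dy exist. Then y ↦ ⟨ν_y, G⟩ = ∫_{ℝ^m} G dν_y and y ↦ ⟨ν_y, F⟩ are integrable on Q, and |L_F − ∫_Q ⟨ν_y, F⟩ φ(y) dy| ≤ L_G − ∫_Q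 ⟨ν_y, G⟩ φ(y) dy; in particular the right-hand side is nonnegative. -/
/-!
Truncating with cutoffs `θₖ` (equal to `1` on the ball of radius `k`, vanishing outside the
ball of radius `k + 1`) turns `F` and `G` into test functions `F θₖ, G θₖ ∈ C₀`, to which the
generation property applies.

Integrability of `⟨ν, G⟩` is a Fatou-type bound: on a set `s` of finite measure,
`∫_s ⟨ν, G θₖ⟩ = lim_R ∫_s (G θₖ)(z^R) ≤ sup_R ∫ G(z^R)`, and monotone convergence removes
first the restriction to `s`, then the cutoff.

For the defect inequality, at each `R` the truncation remainders satisfy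
`|F (1 - θₖ)(z^R) φ| ≤ G (1 - θₖ)(z^R) φ` pointwise. Letting `R → ∞` gives
`|L_F - ∫ ⟨ν, F θₖ⟩ φ| ≤ L_G - ∫ ⟨ν, G θₖ⟩ φ`, and dominated convergence in `k`, with
dominant `⟨ν, G⟩ sup |φ|`, removes the cutoff.
-/

open MeasureTheory Filter Topology
open scoped ZeroAtInfty ENNReal

section Cutoff

variable {E : Type*} [NormedAddCommGroup E]

noncomputable def cutoff (k : ℕ) (v : E) : ℝ := min 1 (max 0 (k + 1 - ‖v‖))

lemma continuous_cutoff (k : ℕ) : Continuous (cutoff k : E → ℝ) := by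
  unfold cutoff; fun_prop

lemma cutoff_nonneg (k : ℕ) (v : E) : 0 ≤ cutoff k v :=
  le_min zero_le_one (le_max_left _ _)

lemma cutoff_le_one (k : ℕ) (v : E) : cutoff k v ≤ 1 :=
  min_le_left _ _

lemma cutoff_eq_one {k : ℕ} {v : E} (h : ‖v‖ ≤ k) : cutoff k v = 1 :=
  min_eq_left (le_max_of_le_right (by linarith))

lemma monotone_cutoff (v : E) : Monotone fun k : ℕ => cutoff k v := by
  intro k l hkl
  have : (k : ℝ) ≤ l := by exact_mod_cast hkl
  dsimp only [cutoff]
  gcongr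

lemma eventually_cutoff_eq_one (v : E) : ∀ᶠ k : ℕ in atTop, cutoff k v = 1 :=
  (eventually_ge_atTop ⌈‖v‖⌉₊).mono fun _ hk =>
    cutoff_eq_one ((Nat.le_ceil _).trans (by exact_mod_cast hk))

lemma hasCompactSupport_cutoff [ProperSpace E] (k : ℕ) :
    HasCompactSupport (cutoff k : E → ℝ) := by
  refine HasCompactSupport.intro (isCompact_closedBall (0 : E) (k + 1)) fun v hv => ?_
  rw [Metric.mem_closedBall, dist_zero_right, not_le] at hv
  simp only [cutoff]
  rw [max_eq_left (by linarith), min_eq_right zero_le_one]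

variable [ProperSpace E] {H : E → ℝ}

noncomputable def cutoffMul (H : E → ℝ) (hH : Continuous H) (k : ℕ) : C₀(E, ℝ) :=
  ⟨⟨fun v => H v * cutoff k v, hH.mul (continuous_cutoff k)⟩,
    (hasCompactSupport_cutoff k).mul_left.is_zero_at_infty⟩

@[simp]
lemma cutoffMul_apply (hH : Continuous H) (k : ℕ) (v : E) :
    cutoffMul H hH k v = H v * cutoff k v :=
  rfl

lemma abs_cutoffMul_le (hH : Continuous H) (k : ℕ) (v : E) :
    |cutoffMul H hH k v| ≤ |H v| := by
  rw [cutoffMul_apply, abs_mul, abs_of_nonneg (cutoff_nonneg k v)]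
  exact mul_le_of_le_one_right (abs_nonneg _) (cutoff_le_one k v)

lemma monotone_cutoffMul (hH : Continuous H) (hH0 : ∀ v, 0 ≤ H v) (v : E) :
    Monotone fun k => cutoffMul H hH k v :=
  fun _ _ hkl => mul_le_mul_of_nonneg_left (monotone_cutoff v hkl) (hH0 v)

lemma tendsto_cutoffMul (hH : Continuous H) (v : E) :
    Tendsto (fun k => cutoffMul H hH k v) atTop (𝓝 (H v)) :=
  tendsto_const_nhds.congr' <| (eventually_cutoff_eq_one v).mono fun k hk => by
    simp [hk]

variable [MeasurableSpace E] [BorelSpace E]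

lemma tendsto_integral_cutoffMul {ν : Measure E} (hH : Continuous H) (hHν : Integrable H ν) :
    Tendsto (fun k => ∫ v, cutoffMul H hH k v ∂ν) atTop (𝓝 (∫ v, H v ∂ν)) :=
  tendsto_integral_of_dominated_convergence (fun v => |H v|)
    (fun k => (cutoffMul H hH k).continuous.aestronglyMeasurable) hHν.abs
    (fun k => ae_of_all _ (abs_cutoffMul_le hH k)) (ae_of_all _ (tendsto_cutoffMul hH))

lemma lintegral_ofReal_eq_iSup_integral_cutoffMul (ν : Measure E) [IsFiniteMeasure ν]
    (hH : Continuous H) (hH0 : ∀ v, 0 ≤ H v) :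
    ∫⁻ v, ENNReal.ofReal (H v) ∂ν = ⨆ k, ENNReal.ofReal (∫ v, cutoffMul H hH k v ∂ν) := by
  have hmono : Monotone fun k v => ENNReal.ofReal (cutoffMul H hH k v) :=
    fun _ _ hkl v => ENNReal.ofReal_le_ofReal (monotone_cutoffMul hH hH0 v hkl)
  calc ∫⁻ v, ENNReal.ofReal (H v) ∂ν
      = ∫⁻ v, ⨆ k, ENNReal.ofReal (cutoffMul H hH k v) ∂ν :=
        lintegral_congr fun v => (iSup_eq_of_tendsto (fun _ _ hkl => hmono hkl v)
          ((ENNReal.continuous_ofReal.tendsto _).comp (tendsto_cutoffMul hH v))).symm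
    _ = ⨆ k, ∫⁻ v, ENNReal.ofReal (cutoffMul H hH k v) ∂ν :=
        lintegral_iSup (fun k => (cutoffMul H hH k).continuous.measurable.ennreal_ofReal) hmono
    _ = ⨆ k, ENNReal.ofReal (∫ v, cutoffMul H hH k v ∂ν) :=
        iSup_congr fun k => (ofReal_integral_eq_lintegral_ofReal
          ((cutoffMul H hH k).toBCF.integrable ν)
          (ae_of_all _ fun v => mul_nonneg (hH0 v) (cutoff_nonneg k v))).symm

end Cutoff

section Integration

variable {X E : Type*} [MeasurableSpace X] {μ : Measure X} [MeasurableSpace E]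
  {κ : X → Measure E} {G : E → ℝ}

lemma ae_integrable_of_lintegral_lintegral_ne_top (hG : Measurable G) (hG0 : ∀ v, 0 ≤ G v)
    (hmeas : Measurable fun y => ∫⁻ v, ENNReal.ofReal (G v) ∂κ y)
    (hfin : ∫⁻ y, ∫⁻ v, ENNReal.ofReal (G v) ∂κ y ∂μ ≠ ∞) :
    ∀ᵐ y ∂μ, Integrable G (κ y) := by
  filter_upwards [ae_lt_top hmeas hfin] with y hy
  exact ⟨hG.aestronglyMeasurable, (hasFiniteIntegral_iff_ofReal (ae_of_all _ hG0)).2 hy⟩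

lemma integrable_integral_of_lintegral_lintegral_ne_top (hG : Measurable G)
    (hG0 : ∀ v, 0 ≤ G v) (hmeas : Measurable fun y => ∫⁻ v, ENNReal.ofReal (G v) ∂κ y)
    (hfin : ∫⁻ y, ∫⁻ v, ENNReal.ofReal (G v) ∂κ y ∂μ ≠ ∞) :
    Integrable (fun y => ∫ v, G v ∂κ y) μ :=
  (integrable_toReal_of_lintegral_ne_top hmeas.aemeasurable hfin).congr <| ae_of_all _ fun _ =>
    (integral_eq_lintegral_of_nonneg_ae (ae_of_all _ hG0) hG.aestronglyMeasurable).symm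

lemma abs_integral_sub_integral_mul_le {a b t φ : X → ℝ}
    (hb : Integrable (fun x => b x * φ x) μ) (ha : AEStronglyMeasurable a μ)
    (hbm : AEStronglyMeasurable b μ) (ht : AEStronglyMeasurable t μ)
    (hφ : AEStronglyMeasurable φ μ) (hab : ∀ x, |a x| ≤ b x) (ht0 : ∀ x, 0 ≤ t x)
    (ht1 : ∀ x, t x ≤ 1) (hφ0 : ∀ x, 0 ≤ φ x) :
    |∫ x, a x * φ x ∂μ - ∫ x, a x * t x * φ x ∂μ|
      ≤ ∫ x, b x * φ x ∂μ - ∫ x, b x * t x * φ x ∂μ := by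
  have hdom : ∀ c : X → ℝ, AEStronglyMeasurable c μ → (∀ x, |c x| ≤ b x) →
      Integrable (fun x => c x * φ x) μ := fun c hc hcb =>
    hb.mono' (hc.mul hφ) <| ae_of_all _ fun x => by
      rw [Real.norm_eq_abs, abs_mul, abs_of_nonneg (hφ0 x)]
      exact mul_le_mul_of_nonneg_right (hcb x) (hφ0 x)
  have hb0 : ∀ x, 0 ≤ b x := fun x => (abs_nonneg _).trans (hab x)
  have htrunc : ∀ c : X → ℝ, ∀ x, |c x * t x| ≤ |c x| := fun c x => by
    rw [abs_mul, abs_of_nonneg (ht0 x)]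
    exact mul_le_of_le_one_right (abs_nonneg _) (ht1 x)
  have hat : Integrable (fun x => a x * t x * φ x) μ :=
    hdom (fun x => a x * t x) (ha.mul ht) fun x => (htrunc a x).trans (hab x)
  have hbt : Integrable (fun x => b x * t x * φ x) μ :=
    hdom (fun x => b x * t x) (hbm.mul ht) fun x =>
      (htrunc b x).trans (abs_of_nonneg (hb0 x)).le
  rw [← integral_sub (hdom a ha hab) hat, ← integral_sub hb hbt]
  have hpointwise : ∀ x, ‖a x * φ x - a x * t x * φ x‖ ≤ b x * φ x - b x * t x * φ x := by
    intro x
    have hrest : 0 ≤ (1 - t x) * φ x := mul_nonneg (sub_nonneg.2 (ht1 x)) (hφ0 x)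
    calc ‖a x * φ x - a x * t x * φ x‖ = |a x| * ((1 - t x) * φ x) := by
          rw [Real.norm_eq_abs, show a x * φ x - a x * t x * φ x = a x * ((1 - t x) * φ x) by ring,
            abs_mul, abs_of_nonneg hrest]
      _ ≤ b x * ((1 - t x) * φ x) := mul_le_mul_of_nonneg_right (hab x) hrest
      _ = b x * φ x - b x * t x * φ x := by ring
  exact norm_integral_le_of_norm_le (hb.sub hbt) (ae_of_all _ hpointwise)

end Integration

section YoungMeasure

variable {X E : Type*} [MeasurableSpace X] {μ : Measure X}
  [TopologicalSpace E] [MeasurableSpace E] {z : ℝ → X → E} {ν : X → Measure E}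

def GeneratesYoungMeasure (μ : Measure X) (z : ℝ → X → E) (ν : X → Measure E) : Prop :=
  ∀ Ψ : X → C₀(E, ℝ), Integrable Ψ μ →
    Tendsto (fun R => ∫ y, Ψ y (z R y) ∂μ) atTop (𝓝 (∫ y, ∫ v, Ψ y v ∂ν y ∂μ))

lemma GeneratesYoungMeasure.restrict (h : GeneratesYoungMeasure μ z ν) {s : Set X}
    (hs : MeasurableSet s) : GeneratesYoungMeasure (μ.restrict s) z ν := by
  intro Ψ hΨ
  have hR : ∀ R, ∫ y, s.indicator Ψ y (z R y) ∂μ = ∫ y in s, Ψ y (z R y) ∂μ := by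
    intro R
    rw [← integral_indicator hs]
    congr 1 with y
    by_cases hy : y ∈ s <;> simp [hy]
  have hlim : ∫ y, ∫ v, s.indicator Ψ y v ∂ν y ∂μ = ∫ y in s, ∫ v, Ψ y v ∂ν y ∂μ := by
    rw [← integral_indicator hs]
    congr 1 with y
    by_cases hy : y ∈ s <;> simp [hy]
  simpa only [hR, hlim] using
    h (s.indicator Ψ) (IntegrableOn.integrable_indicator (f := Ψ) hΨ hs)

lemma GeneratesYoungMeasure.tendsto_integral_mul (h : GeneratesYoungMeasure μ z ν)
    {w : X → ℝ} (hw : Integrable w μ) (f : C₀(E, ℝ)) :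
    Tendsto (fun R => ∫ y, f (z R y) * w y ∂μ) atTop (𝓝 (∫ y, (∫ v, f v ∂ν y) * w y ∂μ)) := by
  simpa [integral_const_mul, mul_comm] using h (fun y => w y • f) (hw.smul_const f)

lemma GeneratesYoungMeasure.lintegral_ofReal_integral_le [SigmaFinite μ]
    [∀ y, IsProbabilityMeasure (ν y)] (h : GeneratesYoungMeasure μ z ν)
    (hνmeas : ∀ f : C₀(E, ℝ), Measurable fun y => ∫ v, f v ∂ν y) {G : E → ℝ} {C : ℝ≥0∞}
    (hG : ∀ᶠ R in atTop, ∫⁻ y, ENNReal.ofReal (G (z R y)) ∂μ ≤ C)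
    (f : C₀(E, ℝ)) (hf0 : ∀ v, 0 ≤ f v) (hfG : ∀ v, f v ≤ G v) :
    ∫⁻ y, ENNReal.ofReal (∫ v, f v ∂ν y) ∂μ ≤ C := by
  -- The constant test function `f` is integrable only over sets of finite measure.
  refine lintegral_le_of_forall_fin_meas_le C fun s hs hμs => ?_
  have : IsFiniteMeasure (μ.restrict s) := isFiniteMeasure_restrict.2 hμs
  have hint : Integrable (fun y => ∫ v, f v ∂ν y) (μ.restrict s) :=
    (integrable_const ‖f.toBCF‖).mono' (hνmeas f).aestronglyMeasurable <| ae_of_all _ fun y => by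
      simpa using norm_integral_le_of_norm_le_const (μ := ν y)
        (ae_of_all _ f.toBCF.norm_coe_le_norm)
  rw [← ofReal_integral_eq_lintegral_ofReal hint (ae_of_all _ fun _ => integral_nonneg hf0)]
  refine le_of_tendsto ((ENNReal.continuous_ofReal.tendsto _).comp
    (h.restrict hs (fun _ => f) (integrable_const f))) ?_
  filter_upwards [hG] with R hR
  calc ENNReal.ofReal (∫ y in s, f (z R y) ∂μ)
      ≤ ∫⁻ y in s, ENNReal.ofReal (f (z R y)) ∂μ := by
        rw [← Real.enorm_eq_ofReal (integral_nonneg fun _ => hf0 _)]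
        refine (enorm_integral_le_lintegral_enorm _).trans_eq (lintegral_congr fun y => ?_)
        exact Real.enorm_eq_ofReal (hf0 _)
    _ ≤ ∫⁻ y in s, ENNReal.ofReal (G (z R y)) ∂μ :=
        lintegral_mono fun _ => ENNReal.ofReal_le_ofReal (hfG _)
    _ ≤ C := (setLIntegral_le_lintegral s _).trans hR

end YoungMeasure

section DefectMeasure

variable {X E : Type*} [MeasurableSpace X] {μ : Measure X}
  [NormedAddCommGroup E] [ProperSpace E] [MeasurableSpace E] [BorelSpace E]
  {z : ℝ → X → E} {ν : X → Measure E} {F G : E → ℝ}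

lemma measurable_lintegral_ofReal [∀ y, IsFiniteMeasure (ν y)]
    (hνmeas : ∀ f : C₀(E, ℝ), Measurable fun y => ∫ v, f v ∂ν y)
    (hG : Continuous G) (hG0 : ∀ v, 0 ≤ G v) :
    Measurable fun y => ∫⁻ v, ENNReal.ofReal (G v) ∂ν y := by
  simp_rw [lintegral_ofReal_eq_iSup_integral_cutoffMul _ hG hG0]
  exact .iSup fun _ => (hνmeas _).ennreal_ofReal

lemma GeneratesYoungMeasure.lintegral_lintegral_ofReal_le [SigmaFinite μ]
    [∀ y, IsProbabilityMeasure (ν y)] (h : GeneratesYoungMeasure μ z ν)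
    (hνmeas : ∀ f : C₀(E, ℝ), Measurable fun y => ∫ v, f v ∂ν y)
    (hG : Continuous G) (hG0 : ∀ v, 0 ≤ G v) {C : ℝ≥0∞}
    (hbound : ∀ᶠ R in atTop, ∫⁻ y, ENNReal.ofReal (G (z R y)) ∂μ ≤ C) :
    ∫⁻ y, ∫⁻ v, ENNReal.ofReal (G v) ∂ν y ∂μ ≤ C := by
  have hmono : Monotone fun k y => ENNReal.ofReal (∫ v, cutoffMul G hG k v ∂ν y) :=
    fun k l hkl y => ENNReal.ofReal_le_ofReal <|
      integral_mono ((cutoffMul G hG k).toBCF.integrable _)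
        ((cutoffMul G hG l).toBCF.integrable _) fun v => monotone_cutoffMul hG hG0 v hkl
  simp_rw [lintegral_ofReal_eq_iSup_integral_cutoffMul _ hG hG0]
  rw [lintegral_iSup (fun _ => (hνmeas _).ennreal_ofReal) hmono]
  exact iSup_le fun k => h.lintegral_ofReal_integral_le hνmeas hbound _
    (fun v => mul_nonneg (hG0 v) (cutoff_nonneg k v))
    (fun v => mul_le_of_le_one_right (hG0 v) (cutoff_le_one k v))

lemma ae_tendsto_integral_cutoffMul (hF : Continuous F) (hFG : ∀ v, |F v| ≤ G v)
    (hGae : ∀ᵐ y ∂μ, Integrable G (ν y)) :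
    ∀ᵐ y ∂μ, Tendsto (fun k => ∫ v, cutoffMul F hF k v ∂ν y) atTop (𝓝 (∫ v, F v ∂ν y)) :=
  hGae.mono fun _ hy =>
    tendsto_integral_cutoffMul hF (hy.mono' hF.aestronglyMeasurable (ae_of_all _ hFG))

lemma integrable_integral_of_abs_le
    (hνmeas : ∀ f : C₀(E, ℝ), Measurable fun y => ∫ v, f v ∂ν y)
    (hF : Continuous F) (hFG : ∀ v, |F v| ≤ G v) (hGae : ∀ᵐ y ∂μ, Integrable G (ν y))
    (hGint : Integrable (fun y => ∫ v, G v ∂ν y) μ) :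
    Integrable (fun y => ∫ v, F v ∂ν y) μ := by
  have hmeas : AEMeasurable (fun y => ∫ v, F v ∂ν y) μ :=
    aemeasurable_of_tendsto_metrizable_ae atTop (fun _ => (hνmeas _).aemeasurable)
      (ae_tendsto_integral_cutoffMul hF hFG hGae)
  refine hGint.mono' hmeas.aestronglyMeasurable ?_
  filter_upwards [hGae] with y hy
  exact norm_integral_le_of_norm_le hy (ae_of_all _ hFG)

lemma tendsto_integral_integral_cutoffMul_mul
    (hνmeas : ∀ f : C₀(E, ℝ), Measurable fun y => ∫ v, f v ∂ν y)
    (hF : Continuous F) (hFG : ∀ v, |F v| ≤ G v) (hGae : ∀ᵐ y ∂μ, Integrable G (ν y))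
    (hGint : Integrable (fun y => ∫ v, G v ∂ν y) μ) {φ : X → ℝ}
    (hφ : AEStronglyMeasurable φ μ) {c : ℝ} (hφc : ∀ y, ‖φ y‖ ≤ c) :
    Tendsto (fun k => ∫ y, (∫ v, cutoffMul F hF k v ∂ν y) * φ y ∂μ) atTop
      (𝓝 (∫ y, (∫ v, F v ∂ν y) * φ y ∂μ)) := by
  refine tendsto_integral_of_dominated_convergence (fun y => (∫ v, G v ∂ν y) * c)
    (fun _ => (hνmeas _).aestronglyMeasurable.mul hφ) (hGint.mul_const c) (fun k => ?_)
    ((ae_tendsto_integral_cutoffMul hF hFG hGae).mono fun y hy => hy.mul_const (φ y))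
  filter_upwards [hGae] with y hy
  have hcut : ‖∫ v, cutoffMul F hF k v ∂ν y‖ ≤ ∫ v, G v ∂ν y :=
    norm_integral_le_of_norm_le hy <| ae_of_all _ fun v =>
      (abs_cutoffMul_le hF k v).trans (hFG v)
  rw [norm_mul]
  exact mul_le_mul hcut (hφc y) (norm_nonneg _) ((norm_nonneg _).trans hcut)

lemma GeneratesYoungMeasure.abs_sub_integral_cutoffMul_mul_le
    (h : GeneratesYoungMeasure μ z ν) (hF : Continuous F) (hG : Continuous G)
    (hFG : ∀ v, |F v| ≤ G v)
    (hz : ∀ᶠ R in atTop, Measurable (z R))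
    (hGz : ∀ᶠ R in atTop, Integrable (fun y => G (z R y)) μ)
    {φ : X → ℝ} (hφ : Integrable φ μ) (hφ0 : ∀ y, 0 ≤ φ y) {c : ℝ} (hφc : ∀ y, ‖φ y‖ ≤ c)
    {LF LG : ℝ} (hLF : Tendsto (fun R => ∫ y, F (z R y) * φ y ∂μ) atTop (𝓝 LF))
    (hLG : Tendsto (fun R => ∫ y, G (z R y) * φ y ∂μ) atTop (𝓝 LG)) (k : ℕ) :
    |LF - ∫ y, (∫ v, cutoffMul F hF k v ∂ν y) * φ y ∂μ|
      ≤ LG - ∫ y, (∫ v, cutoffMul G hG k v ∂ν y) * φ y ∂μ := by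
  refine le_of_tendsto_of_tendsto ((hLF.sub (h.tendsto_integral_mul hφ _)).abs)
    (hLG.sub (h.tendsto_integral_mul hφ _)) ?_
  filter_upwards [hz, hGz] with R hzR hGzR
  simp only [cutoffMul_apply]
  exact abs_integral_sub_integral_mul_le (hGzR.mul_bdd hφ.1 (ae_of_all _ hφc))
    (hF.measurable.comp hzR).aestronglyMeasurable (hG.measurable.comp hzR).aestronglyMeasurable
    ((continuous_cutoff k).measurable.comp hzR).aestronglyMeasurable hφ.1
    (fun _ => hFG _) (fun _ => cutoff_nonneg k _) (fun _ => cutoff_le_one k _) hφ0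

end DefectMeasure

theorem stmt10_general (d m : ℕ)
    (Q : Set (EuclideanSpace ℝ (Fin d)))
    (z : ℝ → EuclideanSpace ℝ (Fin d) → EuclideanSpace ℝ (Fin m))
    (hz : ∀ R > (0:ℝ), Measurable (z R))
    (ν : EuclideanSpace ℝ (Fin d) → Measure (EuclideanSpace ℝ (Fin m)))
    (hν : ∀ y, IsProbabilityMeasure (ν y))
    (hνmeas : ∀ f : C₀(EuclideanSpace ℝ (Fin m), ℝ),
      Measurable (fun y => ∫ lam, f lam ∂(ν y)))
    (hgen : ∀ Ψ : EuclideanSpace ℝ (Fin d) → C₀(EuclideanSpace ℝ (Fin m), ℝ),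
      Integrable Ψ (volume.restrict Q) →
      Tendsto (fun R : ℝ => ∫ y in Q, (Ψ y) (z R y)) atTop
        (nhds (∫ y in Q, ∫ lam, (Ψ y) lam ∂(ν y))))
    (G : EuclideanSpace ℝ (Fin m) → ℝ) (hGcont : Continuous G)
    (hGnonneg : ∀ v, 0 ≤ G v) (cG : ℝ)
    (hGbound : ∀ R > (0:ℝ),
      ∫⁻ y in Q, ENNReal.ofReal (G (z R y)) ≤ ENNReal.ofReal cG)
    (F : EuclideanSpace ℝ (Fin m) → ℝ) (hFcont : Continuous F)
    (hFG : ∀ v, |F v| ≤ G v)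
    (φ : EuclideanSpace ℝ (Fin d) → ℝ) (hφcont : Continuous φ)
    (hφsupp : HasCompactSupport φ) (hφnonneg : ∀ y, 0 ≤ φ y)
    (LF LG : ℝ)
    (hLF : Tendsto (fun R : ℝ => ∫ y in Q, F (z R y) * φ y) atTop (nhds LF))
    (hLG : Tendsto (fun R : ℝ => ∫ y in Q, G (z R y) * φ y) atTop (nhds LG)) :
    Integrable (fun y => ∫ lam, G lam ∂(ν y)) (volume.restrict Q) ∧
    Integrable (fun y => ∫ lam, F lam ∂(ν y)) (volume.restrict Q) ∧
    |LF - ∫ y in Q, (∫ lam, F lam ∂(ν y)) * φ y| ≤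
      LG - ∫ y in Q, (∫ lam, G lam ∂(ν y)) * φ y := by
  have hY : GeneratesYoungMeasure (volume.restrict Q) z ν := hgen
  have hfin : ∫⁻ y in Q, ∫⁻ v, ENNReal.ofReal (G v) ∂ν y ≠ ∞ :=
    ne_top_of_le_ne_top ENNReal.ofReal_ne_top <| hY.lintegral_lintegral_ofReal_le hνmeas hGcont
      hGnonneg ((eventually_gt_atTop 0).mono hGbound)
  have hGmeas := measurable_lintegral_ofReal hνmeas hGcont hGnonneg
  have hGae := ae_integrable_of_lintegral_lintegral_ne_top hGcont.measurable hGnonneg hGmeas hfin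
  have hGint :=
    integrable_integral_of_lintegral_lintegral_ne_top hGcont.measurable hGnonneg hGmeas hfin
  have hGz : ∀ᶠ R in atTop, Integrable (fun y => G (z R y)) (volume.restrict Q) :=
    (eventually_gt_atTop 0).mono fun R hR =>
      ⟨(hGcont.measurable.comp (hz R hR)).aestronglyMeasurable,
        (hasFiniteIntegral_iff_ofReal (ae_of_all _ fun _ => hGnonneg _)).2
          ((hGbound R hR).trans_lt ENNReal.ofReal_lt_top)⟩
  obtain ⟨c, hφc⟩ := hφsupp.exists_bound_of_continuous hφcont
  have hφ : Integrable φ (volume.restrict Q) :=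
    (hφcont.integrable_of_hasCompactSupport hφsupp).restrict
  have hGG : ∀ v, |G v| ≤ G v := fun v => (abs_of_nonneg (hGnonneg v)).le
  refine ⟨hGint, integrable_integral_of_abs_le hνmeas hFcont hFG hGae hGint, ?_⟩
  exact le_of_tendsto_of_tendsto
    (tendsto_const_nhds.sub (tendsto_integral_integral_cutoffMul_mul hνmeas hFcont hFG hGae hGint
      hφ.1 hφc)).abs
    (tendsto_const_nhds.sub (tendsto_integral_integral_cutoffMul_mul hνmeas hGcont hGG hGae hGint
      hφ.1 hφc))
    (Eventually.of_forall (hY.abs_sub_integral_cutoffMul_mul_le hFcont hGcont hFG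
      ((eventually_gt_atTop 0).mono hz) hGz hφ hφnonneg hφc hLF hLG))

/-- Let `(z^R)_{R>0}` on a measurable set `Q ⊆ ℝ^d` generate a Young
measure `(ν_y)_{y∈Q}` (each `ν_y` a probability measure on `ℝ^m`, `y ↦ ν_y` weak-*
measurable, and `∫_Q ψ(y, z^R(y)) dy → ∫_Q ⟨ν_y, ψ(y,·)⟩ dy` for all
`ψ ∈ L¹(Q; C₀(ℝ^m))`). Let `G ≥ 0` be continuous with `∫_Q G(z^R) dy` uniformly bounded,
`F` continuous with `|F| ≤ G`, and `φ ∈ C_c(Q)`, `φ ≥ 0`. If the limits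
`L_F = lim_R ∫_Q F(z^R) φ` and `L_G = lim_R ∫_Q G(z^R) φ` exist, then `⟨ν_·, G⟩` and
`⟨ν_·, F⟩` are integrable on `Q` and the concentration defect of `F` is dominated by that
of `G`: `|L_F - ∫_Q ⟨ν_y, F⟩ φ| ≤ L_G - ∫_Q ⟨ν_y, G⟩ φ`. -/
theorem stmt10 (d m : ℕ)
    (Q : Set (EuclideanSpace ℝ (Fin d))) (hQ : MeasurableSet Q)
    (z : ℝ → EuclideanSpace ℝ (Fin d) → EuclideanSpace ℝ (Fin m))
    (hz : ∀ R > (0:ℝ), Measurable (z R))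
    (ν : EuclideanSpace ℝ (Fin d) → Measure (EuclideanSpace ℝ (Fin m)))
    (hν : ∀ y, IsProbabilityMeasure (ν y))
    (hνmeas : ∀ f : C₀(EuclideanSpace ℝ (Fin m), ℝ),
      Measurable (fun y => ∫ lam, f lam ∂(ν y)))
    (hgen : ∀ Ψ : EuclideanSpace ℝ (Fin d) → C₀(EuclideanSpace ℝ (Fin m), ℝ),
      Integrable Ψ (volume.restrict Q) →
      Tendsto (fun R : ℝ => ∫ y in Q, (Ψ y) (z R y)) atTop
        (nhds (∫ y in Q, ∫ lam, (Ψ y) lam ∂(ν y))))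
    (G : EuclideanSpace ℝ (Fin m) → ℝ) (hGcont : Continuous G)
    (hGnonneg : ∀ v, 0 ≤ G v) (cG : ℝ)
    (hGbound : ∀ R > (0:ℝ),
      ∫⁻ y in Q, ENNReal.ofReal (G (z R y)) ≤ ENNReal.ofReal cG)
    (F : EuclideanSpace ℝ (Fin m) → ℝ) (hFcont : Continuous F)
    (hFG : ∀ v, |F v| ≤ G v)
    (φ : EuclideanSpace ℝ (Fin d) → ℝ) (hφcont : Continuous φ)
    (hφsupp : HasCompactSupport φ) (hφQ : tsupport φ ⊆ Q) (hφnonneg : ∀ y, 0 ≤ φ y)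
    (LF LG : ℝ)
    (hLF : Tendsto (fun R : ℝ => ∫ y in Q, F (z R y) * φ y) atTop (nhds LF))
    (hLG : Tendsto (fun R : ℝ => ∫ y in Q, G (z R y) * φ y) atTop (nhds LG)) :
    Integrable (fun y => ∫ lam, G lam ∂(ν y)) (volume.restrict Q) ∧
    Integrable (fun y => ∫ lam, F lam ∂(ν y)) (volume.restrict Q) ∧
    |LF - ∫ y in Q, (∫ lam, F lam ∂(ν y)) * φ y| ≤
      LG - ∫ y in Q, (∫ lam, G lam ∂(ν y)) * φ y :=
  stmt10_general d m Q z hz ν hν hνmeas hgen G hGcont hGnonneg cG hGbound F hFcont hFG φ hφcont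
    hφsupp hφnonneg LF LG hLF hLG
end
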